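/- Let {S_θ : θ ∈ Θ} be an e-collection for a family of probability measures {P_θ : θ ∈ Θ} on 𝒴 (each S_θ : 𝒴 → [0,∞) measurable with ∫ S_θ dP_θ ≤ 1), let L : Θ × 𝒜 → ℝ satisfy the no-sure-gain condition sup_{θ∈Θ} L(θ,a) ≥ 0 for all a, and let δ : 𝒴 → 𝒜 be any decision rule. Define the capped e-posterior P̂(θ|y) := min{1, 1/S_θ(y)} (with 1/0 := ∞) and the capped risk assessment R̂(y) := sup_{θ∈Θ} P̂(θ|y)·L(θ,δ(y)). Then the quantity 2·R̂ is a valid risk bound in the sense of Proposition 1: for every θ ∈ Θ, E_{Y∼P_θ}[ L(θ,δ(Y)) / (2 R̂(Y)) ] ≤ 1, with the conventions c/∞ := 0, c/0 := 0 for c ≤ 0, and assuming the integrand is measurable. -/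

import Mathlib

/-!
Where `L(θ, δ y) > 0` we have `R̂ y ≥ P̂(θ ∣ y) L(θ, δ y)`, so the integrand is at most
`1 / (2 P̂(θ ∣ y)) = max {1, S θ y} / 2`; elsewhere it is `≤ 0`. Hence its positive part is bounded by
the e-variable `max {1, S θ} / 2 ≤ (1 + S θ) / 2`, whose `P θ`-expectation is at most `1`.
-/

open MeasureTheory ENNReal

theorem ENNReal.inv_min_one_inv (s : ℝ≥0∞) : (min 1 s⁻¹)⁻¹ = max 1 s := by
  rcases le_total 1 s with h | h
  · rw [min_eq_right (ENNReal.inv_le_one.2 h), inv_inv, max_eq_right h]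
  · rw [min_eq_left (ENNReal.one_le_inv.2 h), inv_one, max_eq_left h]

theorem MeasureTheory.integral_le_toReal_lintegral_ofReal {α : Type*} [MeasurableSpace α]
    {μ : Measure α} (f : α → ℝ) :
    ∫ a, f a ∂μ ≤ (∫⁻ a, ENNReal.ofReal (f a) ∂μ).toReal := by
  by_cases hf : Integrable f μ
  · rw [integral_eq_lintegral_pos_part_sub_lintegral_neg_part hf]
    exact sub_le_self _ toReal_nonneg
  · rw [integral_undef hf]
    exact toReal_nonneg

theorem MeasureTheory.lintegral_max_one_div_two_le_one {α : Type*} [MeasurableSpace α]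
    {μ : Measure α} [IsProbabilityMeasure μ] {s : α → ℝ≥0∞} (hs : ∫⁻ a, s a ∂μ ≤ 1) :
    ∫⁻ a, max 1 (s a) / 2 ∂μ ≤ 1 :=
  calc ∫⁻ a, max 1 (s a) / 2 ∂μ ≤ ∫⁻ a, (1 + s a) / 2 ∂μ := by
        gcongr with a; exact max_le_add_of_nonneg zero_le zero_le
    _ = (1 + ∫⁻ a, s a ∂μ) / 2 := by
        simp_rw [div_eq_mul_inv]
        rw [lintegral_mul_const' _ _ (inv_ne_top.2 two_ne_zero), lintegral_add_left measurable_const,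
          lintegral_const, measure_univ, one_mul]
    _ ≤ 1 := by
        rw [ENNReal.div_le_iff two_ne_zero ofNat_ne_top, one_mul]
        calc 1 + ∫⁻ a, s a ∂μ ≤ 1 + 1 := by gcongr
          _ = 2 := one_add_one_eq_two

theorem ofReal_ite_div_two_mul_le {l : ℝ} {p r : ℝ≥0∞} (hp₀ : p ≠ 0) (hp : p ≠ ∞)
    (hr : p * ENNReal.ofReal l ≤ r) :
    ENNReal.ofReal (if 2 * r = 0 ∨ 2 * r = ∞ then 0 else l / (2 * r).toReal) ≤ p⁻¹ / 2 := by
  split_ifs with h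
  · simp
  · push Not at h
    rw [ENNReal.ofReal_div_of_pos (ENNReal.toReal_pos h.1 h.2), ofReal_toReal h.2]
    refine ENNReal.div_le_of_le_mul ?_
    rw [← mul_assoc, ENNReal.div_mul_cancel two_ne_zero ofNat_ne_top]
    exact (mul_le_iff_le_inv hp₀ hp).1 hr

theorem capped_e_posterior_risk_bound_valid_general
    {Θ 𝒴 𝒜 : Type*} [MeasurableSpace 𝒴]
    (P : Θ → Measure 𝒴) [∀ θ, IsProbabilityMeasure (P θ)]
    -- the e-collection
    (S : Θ → 𝒴 → ℝ)
    (hS_e : ∀ θ, ∫⁻ y, ENNReal.ofReal (S θ y) ∂(P θ) ≤ 1)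
    -- the loss function satisfying the no-sure-gain condition
    (L : Θ × 𝒜 → ℝ)
    -- the decision rule
    (δ : 𝒴 → 𝒜)
    -- the capped e-posterior `P̂(θ ∣ y) = min {1, 1 / S θ y}` (with `1/0 = ∞`)
    (Phat : Θ → 𝒴 → ℝ≥0∞)
    (hPhat : ∀ θ y, Phat θ y = min 1 (ENNReal.ofReal (S θ y))⁻¹)
    -- the capped risk assessment `R̂ y = ⨆ θ, P̂(θ ∣ y) * L(θ, δ y)`
    (Rhat : 𝒴 → ℝ≥0∞)
    (hRhat : ∀ y, Rhat y = ⨆ θ : Θ, Phat θ y * ENNReal.ofReal (L (θ, δ y)))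
    -- the integrand `L(θ, δ y) / (2 * R̂ y)`, with conventions `c / ∞ = 0`,
    -- `c / 0 = 0` for `c ≤ 0`
    (g : Θ → 𝒴 → ℝ)
    (hg : ∀ θ y, g θ y =
      if (2 * Rhat y) = 0 ∨ (2 * Rhat y) = ⊤ then 0
      else L (θ, δ y) / (2 * Rhat y).toReal) :
    ∀ θ : Θ, ∫ y, g θ y ∂(P θ) ≤ 1 := by
  intro θ
  have hbound : ∀ y, ENNReal.ofReal (g θ y) ≤ max 1 (ENNReal.ofReal (S θ y)) / 2 := by
    intro y
    rw [hg, ← ENNReal.inv_min_one_inv]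
    refine ofReal_ite_div_two_mul_le ?_ ?_ ?_
    · exact (lt_min one_pos (ENNReal.inv_pos.2 ofReal_ne_top)).ne'
    · exact ne_top_of_le_ne_top one_ne_top (min_le_left _ _)
    · rw [hRhat, ← hPhat]
      exact le_iSup (fun θ' => Phat θ' y * ENNReal.ofReal (L (θ', δ y))) θ
  have hpos : ∫⁻ y, ENNReal.ofReal (g θ y) ∂(P θ) ≤ 1 :=
    (lintegral_mono hbound).trans (lintegral_max_one_div_two_le_one (hS_e θ))
  exact (integral_le_toReal_lintegral_ofReal _).trans
    (toReal_le_of_le_ofReal zero_le_one (by rwa [ofReal_one]))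

/-- Proposition 2: twice the capped e-posterior risk assessment is a valid risk bound.
With the capped e-posterior `P̂(θ ∣ y) = min {1, 1 / S θ y}` and
`R̂ y = ⨆ θ, P̂(θ ∣ y) * L(θ, δ y)`, for every `θ`:
`E_{P θ}[ L(θ, δ Y) / (2 * R̂ Y) ] ≤ 1`. -/
theorem capped_e_posterior_risk_bound_valid
    {Θ 𝒴 𝒜 : Type*} [Nonempty Θ] [MeasurableSpace 𝒴]
    (P : Θ → Measure 𝒴) [∀ θ, IsProbabilityMeasure (P θ)]
    -- the e-collection
    (S : Θ → 𝒴 → ℝ)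
    (hS_nonneg : ∀ θ y, 0 ≤ S θ y)
    (hS_meas : ∀ θ, Measurable (S θ))
    (hS_e : ∀ θ, ∫⁻ y, ENNReal.ofReal (S θ y) ∂(P θ) ≤ 1)
    -- the loss function satisfying the no-sure-gain condition
    (L : Θ × 𝒜 → ℝ)
    (hL_nsg : ∀ a : 𝒜, (0 : EReal) ≤ ⨆ θ : Θ, (L (θ, a) : EReal))
    -- the decision rule
    (δ : 𝒴 → 𝒜)
    -- the capped e-posterior `P̂(θ ∣ y) = min {1, 1 / S θ y}` (with `1/0 = ∞`)
    (Phat : Θ → 𝒴 → ℝ≥0∞)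
    (hPhat : ∀ θ y, Phat θ y = min 1 (ENNReal.ofReal (S θ y))⁻¹)
    -- the capped risk assessment `R̂ y = ⨆ θ, P̂(θ ∣ y) * L(θ, δ y)`
    (Rhat : 𝒴 → ℝ≥0∞)
    (hRhat : ∀ y, Rhat y = ⨆ θ : Θ, Phat θ y * ENNReal.ofReal (L (θ, δ y)))
    -- the integrand `L(θ, δ y) / (2 * R̂ y)`, with conventions `c / ∞ = 0`,
    -- `c / 0 = 0` for `c ≤ 0`
    (g : Θ → 𝒴 → ℝ)
    (hg : ∀ θ y, g θ y =
      if (2 * Rhat y) = 0 ∨ (2 * Rhat y) = ⊤ then 0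
      else L (θ, δ y) / (2 * Rhat y).toReal)
    (hg_meas : ∀ θ, Measurable (g θ)) :
    ∀ θ : Θ, ∫ y, g θ y ∂(P θ) ≤ 1 :=
  capped_e_posterior_risk_bound_valid_general P S hS_e L δ Phat hPhat Rhat hRhat g hg
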